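/- For a > 0, b > 0 and any real ν, ∫₀^∞ x^{ν-1} e^{-ax - b/x} dx = 2 (b/a)^{ν/2} K_ν(2√(ab)), where K_ν is the modified Bessel function of the second kind. -/

import Mathlib

open MeasureTheory Set Real

/-!
Substituting `x = √(b/a) eᵗ` turns `a x + b / x` into `2 √(ab) cosh t` and `x ^ (ν - 1) dx` into
`(b/a) ^ (ν/2) e^(νt) dt`, so the integral becomes `(b/a) ^ (ν/2) ∫_ℝ e^(νt - 2√(ab) cosh t) dt`.
Folding the line onto `(0, ∞)` pairs `e^(νt)` with `e^(-νt)`, which gives `2 cosh (νt)`.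
-/

/-- The modified Bessel function of the second kind (Macdonald function), via its
standard integral representation `K_ν(x) = ∫₀^∞ e^(-x cosh t) cosh(ν t) dt`. -/
noncomputable def besselK (ν x : ℝ) : ℝ :=
  ∫ t in Ioi (0 : ℝ), Real.exp (-x * Real.cosh t) * Real.cosh (ν * t)

theorem Real.one_add_sq_div_two_le_cosh (t : ℝ) : 1 + t ^ 2 / 2 ≤ cosh t := by
  have hsinh : |t| / 2 ≤ sinh (|t| / 2) := self_le_sinh_iff.mpr (by positivity)
  have hcosh : cosh t = 1 + 2 * sinh (|t| / 2) ^ 2 := by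
    rw [← cosh_abs, show |t| = 2 * (|t| / 2) by ring, cosh_two_mul, cosh_sq]
    ring_nf
  rw [hcosh, ← sq_abs t]
  nlinarith [abs_nonneg t]

theorem integrable_exp_mul_sub_mul_sq (c : ℝ) {b : ℝ} (hb : 0 < b) :
    Integrable fun t : ℝ ↦ exp (c * t - b * t ^ 2) := by
  -- complete the square: `c t - b t² = c² / 4b - b (t - c / 2b)²`
  refine (((integrable_exp_neg_mul_sq hb).comp_sub_right (c / (2 * b))).const_mul
    (exp (c ^ 2 / (4 * b)))).congr (.of_forall fun t ↦ ?_)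
  simp only [← exp_add]
  congr 1
  field_simp
  ring

theorem integrable_exp_mul_sub_mul_cosh (ν : ℝ) {s : ℝ} (hs : 0 < s) :
    Integrable fun t : ℝ ↦ exp (ν * t - s * cosh t) := by
  refine (integrable_exp_mul_sub_mul_sq ν (half_pos hs)).mono' (by fun_prop)
    (.of_forall fun t ↦ ?_)
  rw [norm_of_nonneg (exp_pos _).le, exp_le_exp]
  nlinarith [one_add_sq_div_two_le_cosh t]

theorem integral_comp_mul_exp {E : Type*} [NormedAddCommGroup E] [NormedSpace ℝ E]
    (g : ℝ → E) {c : ℝ} (hc : 0 < c) :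
    ∫ t, (c * exp t) • g (c * exp t) = ∫ x in Ioi 0, g x := by
  have himage : (fun t ↦ c * exp t) '' univ = Ioi 0 := by
    rw [image_univ, show (fun t ↦ c * exp t) = (c * ·) ∘ exp from rfl, range_comp, range_exp,
      image_mul_left_Ioi hc, mul_zero]
  rw [← himage, integral_image_eq_integral_abs_deriv_smul MeasurableSet.univ
      (fun t _ ↦ ((hasDerivAt_exp t).const_mul c).hasDerivWithinAt)
      (fun t _ u _ h ↦ exp_injective (mul_left_cancel₀ hc.ne' h)), Measure.restrict_univ]
  simp only [abs_of_pos (mul_pos hc (exp_pos _))]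

theorem integral_eq_integral_Ioi_add_comp_neg {E : Type*} [NormedAddCommGroup E]
    [NormedSpace ℝ E] {f : ℝ → E} (hf : Integrable f) :
    ∫ t, f t = ∫ t in Ioi 0, (f t + f (-t)) := by
  rw [integral_add hf.integrableOn hf.comp_neg.integrableOn, integral_comp_neg_Ioi, neg_zero,
    add_comm, intervalIntegral.integral_Iic_add_Ioi hf.integrableOn hf.integrableOn]

theorem exp_mul_sub_mul_cosh_add_comp_neg (ν s t : ℝ) :
    exp (ν * t - s * cosh t) + exp (ν * -t - s * cosh (-t))
      = 2 * (exp (-s * cosh t) * cosh (ν * t)) := by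
  rw [cosh_neg, cosh_eq (ν * t), show ν * t - s * cosh t = -s * cosh t + ν * t by ring,
    show ν * -t - s * cosh t = -s * cosh t + -(ν * t) by ring, exp_add, exp_add]
  ring

theorem mul_sqrt_div_mul_exp_add_div (t : ℝ) {a b : ℝ} (ha : 0 < a) (hb : 0 < b) :
    a * (√(b / a) * exp t) + b / (√(b / a) * exp t) = 2 * √(a * b) * cosh t := by
  have hc : 0 < √(b / a) := sqrt_pos.2 (div_pos hb ha)
  have hac : a * √(b / a) = √(a * b) := by
    rw [← sqrt_sq ha.le, ← sqrt_mul (sq_nonneg a), sqrt_sq ha.le]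
    field_simp
  have hbc : b / √(b / a) = √(a * b) := by
    rw [div_eq_iff hc.ne', ← hac, mul_assoc, mul_self_sqrt (div_pos hb ha).le]
    field_simp
  rw [cosh_eq, exp_neg, div_mul_eq_div_div, hbc, ← mul_assoc, hac]
  ring

/-- For `a, b > 0` and any real `ν`,
`∫₀^∞ x^(ν-1) e^(-a x - b/x) dx = 2 (b/a)^(ν/2) K_ν(2√(ab))`. -/
theorem integral_rpow_exp_bilateral (a b ν : ℝ) (ha : 0 < a) (hb : 0 < b) :
    ∫ x in Ioi (0 : ℝ), x ^ (ν - 1) * Real.exp (-a * x - b / x)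
      = 2 * (b / a) ^ (ν / 2) * besselK ν (2 * Real.sqrt (a * b)) := by
  set c := √(b / a) with hc_def
  set s := 2 * √(a * b)
  have hc : 0 < c := sqrt_pos.2 (div_pos hb ha)
  have hs : 0 < s := by positivity
  have hsubst (t : ℝ) : (c * exp t) • ((c * exp t) ^ (ν - 1) *
      exp (-a * (c * exp t) - b / (c * exp t))) = c ^ ν * exp (ν * t - s * cosh t) := by
    have hx : 0 < c * exp t := mul_pos hc (exp_pos t)
    have hexp : -a * (c * exp t) - b / (c * exp t) = -(s * cosh t) := by
      linear_combination -mul_sqrt_div_mul_exp_add_div t ha hb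
    rw [hexp, smul_eq_mul, rpow_sub_one hx.ne', mul_rpow hc.le (exp_pos t).le, ← exp_mul,
      mul_comm t ν, sub_eq_add_neg, exp_add]
    field_simp
  have hpow : c ^ ν = (b / a) ^ (ν / 2) := by
    rw [hc_def, sqrt_eq_rpow, ← rpow_mul (div_pos hb ha).le, one_div_mul_eq_div]
  rw [← integral_comp_mul_exp _ hc]
  simp_rw [hsubst]
  rw [integral_const_mul, integral_eq_integral_Ioi_add_comp_neg
    (integrable_exp_mul_sub_mul_cosh ν hs)]
  simp_rw [exp_mul_sub_mul_cosh_add_comp_neg]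
  rw [integral_const_mul, besselK, hpow]
  ring
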